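/- arXiv:2201.11195 — 2 statements merged into one kernel-verified Lean document; each statement's English description precedes it below -/
import Mathlib

section
/- Let G = (V, E) be a finite simple graph and let k ≥ 3 be an integer. Let G⁺ be the graph obtained from G by adding k pairwise disjoint new cliques H₁,…,H_k, each on k+2 new vertices, adding every edge between a vertex of V and a new vertex, and adding no edges between distinct cliques H_i and H_j; and let P(G⁺) be the profile constructed from G⁺. Then the votes of P(G⁺) can be partitioned into k subprofiles, each of which is value-restricted, if and only if V can be partitioned into k cliques of G. -/
/-! The construction `P(H)`: the vertex set of the graph `H` is a finite linearly
ordered type `W` (the linear order is the enumeration `u₁, …, u_n` of the vertices).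
For each non-adjacent pair `p = (u_i, u_j)` with `u_i < u_j` there is a triple of
candidates `a^{i,j}, b^{i,j}, c^{i,j}`, encoded as `(p, 0), (p, 1), (p, 2)`. -/

/-- The non-adjacent pairs `(u_i, u_j)` with `i < j` of the graph `H`. -/
abbrev NonEdge {W : Type*} [LinearOrder W] (H : SimpleGraph W) : Type _ :=
  {p : W × W // p.1 < p.2 ∧ ¬ H.Adj p.1 p.2}

/-- The candidate set of the profile `P(H)`: a triple of candidates
`a^{i,j} = (p, 0)`, `b^{i,j} = (p, 1)`, `c^{i,j} = (p, 2)` for each non-edge `p`. -/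
abbrev Cand {W : Type*} [LinearOrder W] (H : SimpleGraph W) : Type _ :=
  NonEdge H × Fin 3

/-- The position (0 = first, 1 = second, 2 = third) that voter `ℓ` assigns to the
candidate `(e, t)` within its triple: voter `u_i` ranks `a ≻ b ≻ c`, voter `u_j`
ranks `b ≻ c ≻ a`, and every other voter ranks `c ≻ a ≻ b`, where `e = (u_i, u_j)`. -/
def localRank {W : Type*} [LinearOrder W] {H : SimpleGraph W}
    (ℓ : W) (e : NonEdge H) (t : Fin 3) : ℕ :=
  if ℓ = e.val.1 then t.val
  else if ℓ = e.val.2 then (t.val + 2) % 3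
  else (t.val + 1) % 3

/-- The vote `v_ℓ` of the profile `P(H)`, as the strict linear order
`voteRel H ℓ x y` meaning "voter `ℓ` ranks candidate `x` above candidate `y`":
triples are ordered lexicographically by their non-edge, and within a triple
candidates are ordered according to `localRank`. -/
def voteRel {W : Type*} [LinearOrder W] (H : SimpleGraph W)
    (ℓ : W) (x y : Cand H) : Prop :=
  (x.1.val.1 < y.1.val.1 ∨ (x.1.val.1 = y.1.val.1 ∧ x.1.val.2 < y.1.val.2)) ∨
  (x.1 = y.1 ∧ localRank ℓ x.1 x.2 < localRank ℓ y.1 y.2)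

/-- `PosOf i v x y z` says that candidate `x` is ranked in the `i`-th position
(for `i ∈ {1,2,3}`) in the restriction of the vote `v` to the triple `{x, y, z}`. -/
def PosOf {C : Type*} (i : ℕ) (v : C → C → Prop) (x y z : C) : Prop :=
  match i with
  | 1 => v x y ∧ v x z
  | 2 => (v y x ∧ v x z) ∨ (v z x ∧ v x y)
  | 3 => v y x ∧ v z x
  | _ => False

/-- The subprofile of the profile `(vote p)_{p}` given by the index set `S`
contains an `i`-minor. -/
def HasIMinorOn {ι C : Type*} (i : ℕ) (vote : ι → C → C → Prop) (S : Set ι) : Prop :=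
  ∃ p ∈ S, ∃ q ∈ S, ∃ r ∈ S, p ≠ q ∧ p ≠ r ∧ q ≠ r ∧
    ∃ a b c : C, a ≠ b ∧ a ≠ c ∧ b ≠ c ∧
      PosOf i (vote p) a b c ∧ PosOf i (vote q) b a c ∧ PosOf i (vote r) c a b

/-- The graph `G⁺` obtained from `G` by adding `k` pairwise disjoint new cliques,
each on `k + 2` new vertices, adding every edge between an old vertex and a new
vertex, and adding no edges between distinct new cliques. -/
def GPlus {V : Type*} (G : SimpleGraph V) (k : ℕ) :
    SimpleGraph (V ⊕ (Fin k × Fin (k + 2))) where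
  Adj x y :=
    match x, y with
    | Sum.inl a, Sum.inl b => G.Adj a b
    | Sum.inl _, Sum.inr _ => True
    | Sum.inr _, Sum.inl _ => True
    | Sum.inr p, Sum.inr q => p.1 = q.1 ∧ p.2 ≠ q.2
  symm := ⟨by
    rintro (a | p) (b | q) h
    · exact G.adj_symm h
    · trivial
    · trivial
    · exact ⟨h.1.symm, h.2.symm⟩⟩
  loopless := ⟨by
    rintro (a | p) h
    · exact G.irrefl h
    · exact h.2 rfl⟩

/-- The vertex set of `G` can be partitioned into `k` (possibly empty) sets, each of
which induces a complete subgraph. -/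
def CliquePartition {V : Type*} (G : SimpleGraph V) (k : ℕ) : Prop :=
  ∃ f : V → Fin k, ∀ x y : V, f x = f y → x ≠ y → G.Adj x y

/-! Two votes of `P(H)` differ only inside a single triple `T^{i,j}`, and there only the
voters `u_i` and `u_j` deviate from the common order `c ≻ a ≻ b`. So three voters of which two
are non-adjacent form a 1-minor on `T^{i,j}`, whereas among three voters of a clique at most
one deviates on any triple, so two of them rank any three candidates alike and no minor fits.

For `G⁺`, pigeonhole puts two vertices of each added clique `H_i` into a common part; such a
part contains no vertex of another `H_j`, so the `k` parts are matched with the `k` cliques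
`H_i`, every part contains two vertices outside `V`, and hence its vertices in `V` are
pairwise adjacent. Conversely, a clique partition of `G` extended by putting `H_i` into the
`i`-th part partitions `G⁺` into cliques. -/

section Minors
variable {C : Type*} {i : ℕ} {v w : C → C → Prop} {x y z : C}

theorem PosOf.swap (h : PosOf i v x y z) : PosOf i v x z y := by
  rcases i with _ | _ | _ | _ | i <;> simp only [PosOf] at h ⊢ <;> tauto

theorem PosOf.not_and_swap [IsStrictOrder C v] : ¬ (PosOf i v x y z ∧ PosOf i v y x z) := by
  rintro ⟨h, h'⟩
  rcases i with _ | _ | _ | _ | i <;> simp only [PosOf] at h h'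
  · exact asymm h.1 h'.1
  · rcases h with ⟨hyx, hxz⟩ | ⟨hzx, hxy⟩ <;> rcases h' with ⟨hxy', hyz⟩ | ⟨hzy, hyx'⟩
    · exact asymm hyx hxy'
    · exact asymm hyx (_root_.trans hxz hzy)
    · exact asymm hxy (_root_.trans hyz hzx)
    · exact asymm hxy hyx'
  · exact asymm h.1 h'.1

theorem PosOf.false_of_agreeOn [IsStrictOrder C w] {T : Set C}
    (hvw : ∀ s ∈ T, ∀ t ∈ T, v s t ↔ w s t) (hx : x ∈ T) (hy : y ∈ T) (hz : z ∈ T)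
    (h : PosOf i v x y z) (h' : PosOf i w y x z) : False := by
  refine PosOf.not_and_swap ⟨?_, h'⟩
  rcases i with _ | _ | _ | _ | i <;>
    simp only [PosOf, ← hvw _ hx _ hy, ← hvw _ hy _ hx, ← hvw _ hx _ hz, ← hvw _ hz _ hx]
      at h ⊢ <;> exact h

theorem exists_eq_of_apply_eq_of_ne {α β : Type*} (f : α → β) (a b c : α) :
    ∃ e, ∀ s ∈ ({a, b, c} : Set α), ∀ t ∈ ({a, b, c} : Set α), s ≠ t → f s = f t → f s = e := by
  by_cases hab : f a = f b
  · refine ⟨f a, ?_⟩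
    rintro s (rfl | rfl | rfl) t (rfl | rfl | rfl) <;> grind
  by_cases hac : f a = f c
  · refine ⟨f a, ?_⟩
    rintro s (rfl | rfl | rfl) t (rfl | rfl | rfl) <;> grind
  · refine ⟨f b, ?_⟩
    rintro s (rfl | rfl | rfl) t (rfl | rfl | rfl) <;> grind

end Minors

section Votes
variable {W : Type*} [LinearOrder W] {H : SimpleGraph W}

theorem voteRel_iff_toLex_lt {ℓ : W} {x y : Cand H} :
    voteRel H ℓ x y ↔ toLex (x.1.val.1, toLex (x.1.val.2, localRank ℓ x.1 x.2)) <
      toLex (y.1.val.1, toLex (y.1.val.2, localRank ℓ y.1 y.2)) := by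
  obtain ⟨⟨⟨x1, x2⟩, hx⟩, s⟩ := x
  obtain ⟨⟨⟨y1, y2⟩, hy⟩, t⟩ := y
  simp only [voteRel, Prod.Lex.toLex_lt_toLex, Subtype.mk.injEq, Prod.mk.injEq]
  grind

instance (ℓ : W) : IsStrictOrder (Cand H) (voteRel H ℓ) where
  irrefl x := by simp [voteRel]
  trans x y z := by simp only [voteRel_iff_toLex_lt]; exact lt_trans

theorem localRank_of_ne_of_ne {ℓ : W} {e : NonEdge H} (h₁ : ℓ ≠ e.val.1) (h₂ : ℓ ≠ e.val.2)
    (t : Fin 3) : localRank ℓ e t = (t.val + 1) % 3 := by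
  simp [localRank, h₁, h₂]

theorem voteRel_iff_of_ne_endpoints {ℓ ℓ' : W} {e : NonEdge H} {x y : Cand H}
    (hxy : x.1 = y.1 → x.1 = e) (hℓ : ℓ ≠ e.val.1 ∧ ℓ ≠ e.val.2)
    (hℓ' : ℓ' ≠ e.val.1 ∧ ℓ' ≠ e.val.2) : voteRel H ℓ x y ↔ voteRel H ℓ' x y := by
  obtain ⟨d, s⟩ := x
  obtain ⟨d', t⟩ := y
  by_cases hd : d = d'
  · subst hd
    obtain rfl : d = e := hxy rfl
    simp only [voteRel, localRank_of_ne_of_ne hℓ.1 hℓ.2, localRank_of_ne_of_ne hℓ'.1 hℓ'.2]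
  · simp [voteRel, hd]

theorem SimpleGraph.IsClique.eq_of_endpoints {S : Set W} (hS : H.IsClique S) (e : NonEdge H)
    {ℓ ℓ' : W} (hℓS : ℓ ∈ S) (hℓ'S : ℓ' ∈ S) (hℓ : ℓ = e.val.1 ∨ ℓ = e.val.2)
    (hℓ' : ℓ' = e.val.1 ∨ ℓ' = e.val.2) : ℓ = ℓ' := by
  by_contra hne
  have hadj := hS hℓS hℓ'S hne
  rcases hℓ with rfl | rfl <;> rcases hℓ' with rfl | rfl
  exacts [hne rfl, e.prop.2 hadj, e.prop.2 hadj.symm, hne rfl]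

theorem not_hasIMinorOn_of_isClique {S : Set W} (hS : H.IsClique S) (j : ℕ) :
    ¬ HasIMinorOn j (voteRel H) S := by
  rintro ⟨p, hp, q, hq, r, hr, hpq, hpr, hqr, a, b, c, -, -, -, hpa, hqb, hrc⟩
  set T : Set (Cand H) := {a, b, c}
  have ha : a ∈ T := by simp [T]
  have hb : b ∈ T := by simp [T]
  have hc : c ∈ T := by simp [T]
  -- at most one pair of the three candidates shares a triple
  obtain ⟨e, he⟩ := exists_eq_of_apply_eq_of_ne Prod.fst a b c
  have agree : ∀ ℓ ℓ', (ℓ ≠ e.val.1 ∧ ℓ ≠ e.val.2) → (ℓ' ≠ e.val.1 ∧ ℓ' ≠ e.val.2) →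
      ∀ s ∈ T, ∀ t ∈ T, voteRel H ℓ s t ↔ voteRel H ℓ' s t := by
    intro ℓ ℓ' hℓ hℓ' s hs t ht
    by_cases hst : s = t
    · subst hst
      simp only [irrefl]
    · exact voteRel_iff_of_ne_endpoints (he s hs t ht hst) hℓ hℓ'
  by_cases hp' : p = e.val.1 ∨ p = e.val.2
  · have hq' := not_or.mp fun h => hpq (hS.eq_of_endpoints e hp hq hp' h)
    have hr' := not_or.mp fun h => hpr (hS.eq_of_endpoints e hp hr hp' h)
    exact PosOf.false_of_agreeOn (agree q r hq' hr') hb hc ha hqb.swap hrc.swap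
  by_cases hq' : q = e.val.1 ∨ q = e.val.2
  · have hr' := not_or.mp fun h => hqr (hS.eq_of_endpoints e hq hr hq' h)
    exact PosOf.false_of_agreeOn (agree p r (not_or.mp hp') hr') ha hc hb hpa.swap hrc
  · exact PosOf.false_of_agreeOn (agree p q (not_or.mp hp') (not_or.mp hq')) ha hb hc hpa hqb

theorem hasIMinorOn_one_of_not_adj {S : Set W} {u v w : W} (hu : u ∈ S) (hv : v ∈ S)
    (hw : w ∈ S) (huv : u ≠ v) (huw : u ≠ w) (hvw : v ≠ w) (hadj : ¬ H.Adj u v) :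
    HasIMinorOn 1 (voteRel H) S := by
  wlog hlt : u < v generalizing u v
  · exact this hv hu huv.symm hvw huw (fun h => hadj h.symm) (huv.symm.lt_of_le (not_lt.mp hlt))
  let e : NonEdge H := ⟨(u, v), hlt, hadj⟩
  -- `u` ranks `a^{u,v}` first, `v` ranks `b^{u,v}` first, and `w` ranks `c^{u,v}` first
  refine ⟨u, hu, v, hv, w, hw, huv, huw, hvw, (e, 0), (e, 1), (e, 2), by simp, by simp, by simp,
    ?_, ?_, ?_⟩ <;>
  simp [PosOf, voteRel, localRank, e, huv.symm, huw.symm, hvw.symm]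

theorem adj_of_not_hasIMinorOn_one {S : Set W} (hS : ¬ HasIMinorOn 1 (voteRel H) S)
    {u v w : W} (hu : u ∈ S) (hv : v ∈ S) (hw : w ∈ S) (huv : u ≠ v) (huw : u ≠ w)
    (hvw : v ≠ w) : H.Adj u v :=
  not_not.mp fun hadj => hS (hasIMinorOn_one_of_not_adj hu hv hw huv huw hvw hadj)

end Votes

section GPlus
variable {V : Type*} {G : SimpleGraph V} {k : ℕ}

theorem isClique_gPlus_of_cliquePartition {g : V → Fin k}
    (hg : ∀ x y, g x = g y → x ≠ y → G.Adj x y) (i : Fin k) :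
    (GPlus G k).IsClique {w | Sum.elim g Prod.fst w = i} := by
  rintro (x | p) hx (y | q) hy hne
  · exact hg x y (hx.trans hy.symm) (fun h => hne (congrArg Sum.inl h))
  · trivial
  · trivial
  · exact ⟨hx.trans hy.symm, fun h => hne (congrArg Sum.inr (Prod.ext (hx.trans hy.symm) h))⟩

variable [LinearOrder (V ⊕ (Fin k × Fin (k + 2)))]

theorem cliquePartition_of_forall_not_hasIMinorOn_one (f : V ⊕ (Fin k × Fin (k + 2)) → Fin k)
    (hf : ∀ i, ¬ HasIMinorOn 1 (voteRel (GPlus G k)) {w | f w = i}) : CliquePartition G k := by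
  have pigeonhole : ∀ i : Fin k, ∃ m₁ m₂ : Fin (k + 2), m₁ ≠ m₂ ∧
      f (.inr (i, m₁)) = f (.inr (i, m₂)) := fun i =>
    Fintype.exists_ne_map_eq_of_card_lt _ (by simp)
  choose m₁ m₂ hm hfm using pigeonhole
  -- two added cliques cannot share a part, so every part contains two vertices of one of them
  have hinj : Function.Injective fun i => f (.inr (i, m₁ i)) := by
    intro i i' hii'
    by_contra hne
    exact hne (adj_of_not_hasIMinorOn_one (hf _) (w := .inr (i, m₂ i)) rfl hii'.symm (hfm i).symm
      (by simp [hne]) (by simp [hm i]) (by simp [Ne.symm hne])).1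
  refine ⟨fun x => f (.inl x), fun x y hxy hne => ?_⟩
  obtain ⟨i, hi⟩ := Finite.injective_iff_surjective.mp hinj (f (.inl x))
  exact adj_of_not_hasIMinorOn_one (hf _) (w := .inr (i, m₁ i)) rfl hxy.symm hi
    (by simpa using hne) (by simp) (by simp)

end GPlus

theorem valueRestricted_partition_iff_cliquePartition_general
    {V : Type*} (G : SimpleGraph V) (k : ℕ)
    [LinearOrder (V ⊕ (Fin k × Fin (k + 2)))] :
    (∃ f : (V ⊕ (Fin k × Fin (k + 2))) → Fin k,
        ∀ i : Fin k, ∀ j : ℕ, j = 1 ∨ j = 2 ∨ j = 3 →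
          ¬ HasIMinorOn j (voteRel (GPlus G k)) {w | f w = i}) ↔
      CliquePartition G k := by
  constructor
  · rintro ⟨f, hf⟩
    exact cliquePartition_of_forall_not_hasIMinorOn_one f fun i => hf i 1 (Or.inl rfl)
  · rintro ⟨g, hg⟩
    exact ⟨Sum.elim g Prod.fst, fun i j _ =>
      not_hasIMinorOn_of_isClique (isClique_gPlus_of_cliquePartition hg i) j⟩

/-- For `k ≥ 3` and any enumeration (linear order) of the vertices of `G⁺`, the
votes of the profile `P(G⁺)` can be partitioned into `k` subprofiles, each
value-restricted (containing no `j`-minor for `j ∈ {1,2,3}`), if and only if the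
vertex set of `G` can be partitioned into `k` cliques. -/
theorem valueRestricted_partition_iff_cliquePartition
    {V : Type*} [Fintype V] (G : SimpleGraph V) (k : ℕ) (hk : 3 ≤ k)
    [LinearOrder (V ⊕ (Fin k × Fin (k + 2)))] :
    (∃ f : (V ⊕ (Fin k × Fin (k + 2))) → Fin k,
        ∀ i : Fin k, ∀ j : ℕ, j = 1 ∨ j = 2 ∨ j = 3 →
          ¬ HasIMinorOn j (voteRel (GPlus G k)) {w | f w = i}) ↔
      CliquePartition G k :=
  valueRestricted_partition_iff_cliquePartition_general G k
end

section
/- Let G = (V, E) be a finite simple graph and let k ≥ 3 be an integer. Let G⁺ be the graph obtained from G by adding k pairwise disjoint new cliques H₁,…,H_k, each on k+2 new vertices, adding every edge between a vertex of V and a new vertex, and adding no edges between distinct cliques H_i and H_j; and let P(G⁺) be the profile constructed from G⁺. Then the votes of P(G⁺) can be partitioned into k subprofiles, each of which is group-separable, if and only if V can be partitioned into k cliques of G. -/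
/-- The subprofile of the profile `(vote p)_{p}` given by the index set `S` is
group-separable: every set `A` of candidates with `|A| ≥ 2` has a nonempty proper
subset `B ⊊ A` such that every vote of the subprofile ranks all of `B` above all of
`A \ B`, or all of `A \ B` above all of `B`. -/
def GroupSeparableOn {ι C : Type*} [DecidableEq C]
    (vote : ι → C → C → Prop) (S : Set ι) : Prop :=
  ∀ A : Finset C, 2 ≤ A.card →
    ∃ B : Finset C, B.Nonempty ∧ B ⊂ A ∧
      ∀ p ∈ S, (∀ b ∈ B, ∀ x ∈ A \ B, vote p b x) ∨ (∀ b ∈ B, ∀ x ∈ A \ B, vote p x b)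

/-! On the triple of a non-edge `(u_i, u_j)` the votes of `P(H)` are the three rotations of
`a ≻ b ≻ c`: `v_i` and `v_j` cast two of them and every other voter the third. A set of voters
containing `u_i`, `u_j` and a third voter therefore contains the Condorcet cycle and is not
group-separable. A clique of `H` misses `u_i` or `u_j`, so on each triple it casts at most two
rotations, which are group-separable; sets of candidates meeting several triples are split off
along the lexicographic order of the triples, on which all votes agree.

In `G⁺` each added clique has `k + 2 > k` vertices, so two of them share a class; as distinct added
cliques are non-adjacent, this matches the classes with the added cliques, and every class contains
a new vertex, the third voter that forces any two old vertices of the class to be adjacent.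
Conversely, a clique partition of `G` extended by the added cliques is a clique partition of `G⁺`. -/

section Separation

variable {C : Type*} [DecidableEq C]

def SeparatesIn (r : C → C → Prop) (B A : Finset C) : Prop :=
  (∀ b ∈ B, ∀ x ∈ A \ B, r b x) ∨ (∀ b ∈ B, ∀ x ∈ A \ B, r x b)

theorem separatesIn_map_iff {D : Type*} [DecidableEq D] {r : C → C → Prop}
    {r' : D → D → Prop} (f : D ↪ C) (hr : ∀ a b, r (f a) (f b) ↔ r' a b)
    (B A : Finset D) : SeparatesIn r (B.map f) (A.map f) ↔ SeparatesIn r' B A := by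
  simp only [SeparatesIn, ← Finset.map_sdiff, Finset.forall_mem_map, hr]

theorem GroupSeparableOn.comap {ι κ D : Type*} [DecidableEq D]
    {vote : ι → C → C → Prop} {vote' : κ → D → D → Prop} {S : Set ι} {S' : Set κ}
    (h : GroupSeparableOn vote S) (f : D ↪ C) (g : κ → ι) (hg : ∀ p ∈ S', g p ∈ S)
    (hvote : ∀ p a b, vote (g p) (f a) (f b) ↔ vote' p a b) :
    GroupSeparableOn vote' S' := by
  intro A hA
  obtain ⟨B, hBne, hBA, hsep⟩ := h (A.map f) (by rwa [Finset.card_map])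
  obtain ⟨B', -, rfl⟩ := Finset.subset_map_iff.mp hBA.subset
  exact ⟨B', Finset.map_nonempty.mp hBne, Finset.map_ssubset_map.mp hBA,
    fun p hp => (separatesIn_map_iff f (hvote p) B' A).mp (hsep _ (hg p hp))⟩

theorem exists_ssubset_separatesIn_of_key {κ : Type*} [LinearOrder κ] (key : C → κ)
    {A : Finset C} {c d : C} (hc : c ∈ A) (hd : d ∈ A) (hcd : key c ≠ key d) :
    ∃ B : Finset C, B.Nonempty ∧ B ⊂ A ∧
      ∀ r : C → C → Prop, (∀ a b, key a < key b → r a b) → SeparatesIn r B A := by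
  have hne : (A.image key).Nonempty := ⟨_, Finset.mem_image_of_mem key hc⟩
  set m := (A.image key).min' hne
  refine ⟨A.filter (key · = m), ?_, ?_, fun r hr => Or.inl ?_⟩
  · obtain ⟨a, ha, ham⟩ := Finset.mem_image.mp ((A.image key).min'_mem hne)
    exact ⟨a, Finset.mem_filter.mpr ⟨ha, ham⟩⟩
  · refine Finset.ssubset_iff_of_subset (Finset.filter_subset _ _) |>.mpr ?_
    by_cases hcm : key c = m
    · exact ⟨d, hd, fun hd' => hcd (hcm.trans (Finset.mem_filter.mp hd').2.symm)⟩
    · exact ⟨c, hc, fun hc' => hcm (Finset.mem_filter.mp hc').2⟩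
  · intro b hb x hx
    obtain ⟨hxA, hxm⟩ := Finset.mem_sdiff.mp hx
    refine hr b x ((Finset.mem_filter.mp hb).2 ▸ lt_of_le_of_ne
      ((A.image key).min'_le _ (Finset.mem_image_of_mem key hxA)) fun h => ?_)
    exact hxm (Finset.mem_filter.mpr ⟨hxA, h.symm⟩)

end Separation

/-- The three rotations `σ = 0, 1, 2` of the vote `0 ≻ 1 ≻ 2` form the Condorcet cycle; on the
triple `(a, b, c) = (0, 1, 2)` of a non-edge `(u_i, u_j)`, the vote `v_i` of `P(H)` is the rotation
by `0`, `v_j` the rotation by `2`, and every other vote the rotation by `1` (`localShift`). -/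
def rotationVote (σ s t : Fin 3) : Prop :=
  s + σ < t + σ

-- Each candidate is ranked in the middle by one of the three rotations.
theorem not_groupSeparableOn_rotationVote_univ :
    ¬ GroupSeparableOn rotationVote (Set.univ : Set (Fin 3)) := by
  simp only [GroupSeparableOn, Set.mem_univ, true_implies, rotationVote]
  decide

-- The candidate that the missing rotation ranks in the middle is ranked first or last by the others.
theorem groupSeparableOn_rotationVote_compl_singleton (σ₀ : Fin 3) :
    GroupSeparableOn rotationVote ({σ₀}ᶜ : Set (Fin 3)) := by
  simp only [GroupSeparableOn, Set.mem_compl_iff, Set.mem_singleton_iff, rotationVote]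
  revert σ₀
  decide

section Profile

variable {W : Type*} [LinearOrder W] {H : SimpleGraph W}

def localShift (ℓ : W) (e : NonEdge H) : Fin 3 :=
  if ℓ = e.val.1 then 0 else if ℓ = e.val.2 then 2 else 1

theorem voteRel_mk_mk_iff (ℓ : W) (e : NonEdge H) (s t : Fin 3) :
    voteRel H ℓ (e, s) (e, t) ↔ rotationVote (localShift ℓ e) s t := by
  have hrank : ∀ u, localRank ℓ e u = (u + localShift ℓ e).val := by
    intro u
    unfold localRank localShift
    split_ifs <;> simp [Fin.val_add]
  simp only [voteRel, rotationVote, hrank, Fin.lt_def, lt_irrefl, and_false, or_false,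
    false_or, true_and]

theorem voteRel_of_toLex_lt (ℓ : W) {x y : Cand H} (h : toLex x.1.val < toLex y.1.val) :
    voteRel H ℓ x y :=
  Or.inl (Prod.Lex.lt_iff.mp h)

theorem GroupSeparableOn.adj {S : Set W} (hS : GroupSeparableOn (voteRel H) S)
    {x y z : W} (hx : x ∈ S) (hy : y ∈ S) (hz : z ∈ S) (hxy : x ≠ y) (hzx : z ≠ x)
    (hzy : z ≠ y) : H.Adj x y := by
  wlog hlt : x < y generalizing x y
  · exact (this hy hx hxy.symm hzy hzx (hxy.lt_or_gt.resolve_left hlt)).symm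
  by_contra hna
  let e : NonEdge H := ⟨(x, y), hlt, hna⟩
  have hshift : ∀ σ, localShift (![x, z, y] σ) e = σ := by
    intro σ
    fin_cases σ <;> simp [localShift, e, hzx, hzy, hxy.symm]
  refine not_groupSeparableOn_rotationVote_univ <|
    hS.comap (Function.Embedding.sectR e (Fin 3)) ![x, z, y] (fun σ _ => ?_)
      fun σ s t => (voteRel_mk_mk_iff _ e s t).trans (by rw [hshift])
  fin_cases σ <;> assumption

theorem exists_forall_localShift_ne {S : Set W} (hS : H.IsClique S) (e : NonEdge H) :
    ∃ σ₀, ∀ ℓ ∈ S, localShift ℓ e ≠ σ₀ := by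
  by_cases h₁ : e.val.1 ∈ S
  · refine ⟨2, fun ℓ hℓ h => ?_⟩
    have h₂ : ℓ = e.val.2 := by
      unfold localShift at h
      split_ifs at h <;> simp_all
    exact e.prop.2 (hS h₁ (h₂ ▸ hℓ) e.prop.1.ne)
  · refine ⟨0, fun ℓ hℓ h => h₁ ?_⟩
    unfold localShift at h
    split_ifs at h <;> simp_all

theorem groupSeparableOn_voteRel_of_isClique {S : Set W} (hS : H.IsClique S) :
    GroupSeparableOn (voteRel H) S := by
  intro A hA
  obtain ⟨c, hc⟩ := Finset.card_pos.mp (by omega : 0 < A.card)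
  by_cases hone : ∀ d ∈ A, d.1 = c.1
  · let f := Function.Embedding.sectR c.1 (Fin 3)
    obtain ⟨A', -, rfl⟩ := Finset.subset_map_iff.mp
      (fun d hd => Finset.mem_map.mpr ⟨d.2, Finset.mem_univ _, Prod.ext (hone d hd).symm rfl⟩ :
        A ⊆ Finset.univ.map f)
    obtain ⟨σ₀, hσ₀⟩ := exists_forall_localShift_ne hS c.1
    obtain ⟨B', hBne, hBA, hsep⟩ :=
      groupSeparableOn_rotationVote_compl_singleton σ₀ A' (by rwa [Finset.card_map] at hA)
    exact ⟨B'.map f, Finset.map_nonempty.mpr hBne, Finset.map_ssubset_map.mpr hBA,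
      fun ℓ hℓ => (separatesIn_map_iff f (voteRel_mk_mk_iff ℓ c.1) B' A').mpr
        (hsep _ (hσ₀ ℓ hℓ))⟩
  · push Not at hone
    obtain ⟨d, hd, hdc⟩ := hone
    obtain ⟨B, hBne, hBA, hsep⟩ := exists_ssubset_separatesIn_of_key
      (fun x : Cand H => toLex x.1.val) hd hc
      (fun h => hdc (Subtype.ext (toLex_inj.mp h)))
    exact ⟨B, hBne, hBA, fun ℓ _ => hsep _ fun _ _ => voteRel_of_toLex_lt ℓ⟩

end Profile

namespace GPlus

variable {V : Type*} {G : SimpleGraph V} {k : ℕ}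

theorem exists_apply_inr_eq [LinearOrder (V ⊕ (Fin k × Fin (k + 2)))]
    {f : V ⊕ (Fin k × Fin (k + 2)) → Fin k}
    (hf : ∀ i, GroupSeparableOn (voteRel (GPlus G k)) {w | f w = i}) (i : Fin k) :
    ∃ p, f (Sum.inr p) = i := by
  have hpair : ∀ j : Fin k, ∃ c₁ c₂ : Fin (k + 2), c₁ ≠ c₂ ∧
      f (Sum.inr (j, c₁)) = f (Sum.inr (j, c₂)) :=
    fun j => Fintype.exists_ne_map_eq_of_card_lt _ (by simp)
  choose c₁ c₂ hne heq using hpair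
  -- Vertices of distinct added cliques are non-adjacent, so these `k` classes are distinct.
  have hinj : Function.Injective fun j => f (Sum.inr (j, c₁ j)) := by
    intro j j' hjj'
    by_contra hne'
    refine hne' ((hf _).adj (x := Sum.inr (j, c₁ j)) (y := Sum.inr (j', c₁ j'))
      (z := Sum.inr (j, c₂ j)) rfl hjj'.symm (heq j).symm ?_ ?_ ?_).1
    all_goals simp [hne', (hne j).symm]
  obtain ⟨j, hj⟩ := (Finite.injective_iff_surjective.mp hinj) i
  exact ⟨_, hj⟩

theorem isClique_fiber_sumElim {f : V → Fin k}
    (hf : ∀ x y, f x = f y → x ≠ y → G.Adj x y) (i : Fin k) :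
    (GPlus G k).IsClique {w | Sum.elim f Prod.fst w = i} := by
  rintro (a | p) ha (b | q) hb hne
  · exact hf a b (ha.trans hb.symm) (fun h => hne (congrArg _ h))
  · trivial
  · trivial
  · exact ⟨ha.trans hb.symm, fun h => hne (congrArg _ (Prod.ext (ha.trans hb.symm) h))⟩

end GPlus

theorem groupSeparable_partition_iff_cliquePartition_general
    {V : Type*} (G : SimpleGraph V) (k : ℕ)
    [LinearOrder (V ⊕ (Fin k × Fin (k + 2)))] :
    (∃ f : (V ⊕ (Fin k × Fin (k + 2))) → Fin k,
        ∀ i : Fin k, GroupSeparableOn (voteRel (GPlus G k)) {w | f w = i}) ↔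
      CliquePartition G k := by
  constructor
  · rintro ⟨f, hf⟩
    refine ⟨f ∘ Sum.inl, fun v w hvw hne => ?_⟩
    obtain ⟨p, hp⟩ := GPlus.exists_apply_inr_eq hf (f (Sum.inl v))
    exact (hf _).adj (z := Sum.inr p) rfl hvw.symm hp (Sum.inl_injective.ne hne)
      Sum.inr_ne_inl Sum.inr_ne_inl
  · rintro ⟨f, hf⟩
    exact ⟨Sum.elim f Prod.fst,
      fun i => groupSeparableOn_voteRel_of_isClique (GPlus.isClique_fiber_sumElim hf i)⟩

/-- For `k ≥ 3` and any enumeration (linear order) of the vertices of `G⁺`, the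
votes of the profile `P(G⁺)` can be partitioned into `k` subprofiles, each
group-separable, if and only if the vertex set of `G` can be partitioned into `k`
cliques. -/
theorem groupSeparable_partition_iff_cliquePartition
    {V : Type*} [Fintype V] (G : SimpleGraph V) (k : ℕ) (hk : 3 ≤ k)
    [LinearOrder (V ⊕ (Fin k × Fin (k + 2)))] :
    (∃ f : (V ⊕ (Fin k × Fin (k + 2))) → Fin k,
        ∀ i : Fin k, GroupSeparableOn (voteRel (GPlus G k)) {w | f w = i}) ↔
      CliquePartition G k :=
  groupSeparable_partition_iff_cliquePartition_general G k
end
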